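/- There exists a constant C > 0 (depending only on the number field K) such that for every v ∈ K_S² with H(v) ≠ 0, there exists a unit ξ ∈ O_K^× with C^{-1} H(v)^{1/d} ≤ ||τ(ξ)·v|| ≤ C · H(v)^{1/d}, where ||·|| is the supremum over all σ ∈ S of the max-norm of v^σ. -/

import Mathlib

open NumberField
open scoped Classical
noncomputable section

/-- The height function on `K_S²`. -/
def heightKS (K : Type*) [Field K] [NumberField K]
    (v : InfinitePlace K → Fin 2 → ℂ) : ℝ :=
  (∏ w ∈ Finset.univ.filter (fun w : InfinitePlace K => w.IsReal),
      max ‖v w 0‖ ‖v w 1‖) *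
  (∏ w ∈ Finset.univ.filter (fun w : InfinitePlace K => w.IsComplex),
      (max ‖v w 0‖ ‖v w 1‖) ^ 2)

/-- The supremum norm on `K_S²`: the sup over places of the max-norm of the component. -/
def supNormKS (K : Type*) [Field K] [NumberField K]
    (v : InfinitePlace K → Fin 2 → ℂ) : ℝ :=
  Finset.univ.sup' Finset.univ_nonempty (fun w : InfinitePlace K => max ‖v w 0‖ ‖v w 1‖)

/-!
Write `‖v w‖` for the max-norm of the `w`-component and `m_w` for the multiplicity of `w`, so
that `log H(v) = ∑ m_w log ‖v w‖`. With `μ = log H(v) / d`, the vector `x_w = μ - log ‖v w‖`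
satisfies `∑ m_w x_w = 0`. The logarithmic embedding of the units is a full lattice in this
hyperplane (Dirichlet), so it lies within a uniform distance `B` of `x`: some unit `ξ` has
`|log w(ξ) - x_w| ≤ B` for all `w`. Then `‖ξ • v w‖ = w(ξ) ‖v w‖` lies between `e^{-B} e^μ` and
`e^B e^μ`, and `e^μ = H(v)^{1/d}`.
-/

theorem ZLattice.exists_norm_sub_le {E : Type*} [NormedAddCommGroup E] [NormedSpace ℝ E]
    [FiniteDimensional ℝ E] (L : Submodule ℤ E) [DiscreteTopology L] [IsZLattice ℝ L] :
    ∃ B, 0 ≤ B ∧ ∀ x : E, ∃ l ∈ L, ‖x - l‖ ≤ B := by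
  let b := (Module.Free.chooseBasis ℤ L).ofZLatticeBasis ℝ L
  refine ⟨∑ i, ‖b i‖, by positivity, fun x => ⟨ZSpan.floor b x, ?_, ZSpan.norm_fract_le b x⟩⟩
  exact ((Module.Free.chooseBasis ℤ L).ofZLatticeBasis_span ℝ).le (ZSpan.floor b x).2

namespace NumberField.Units

open InfinitePlace dirichletUnitTheorem

theorem exists_norm_logEmbedding_sub_le (K : Type*) [Field K] [NumberField K] :
    ∃ B, 0 ≤ B ∧ ∀ t : logSpace K, ∃ ξ : (𝓞 K)ˣ, ‖logEmbedding K (Additive.ofMul ξ) - t‖ ≤ B := by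
  obtain ⟨B, hB0, hB⟩ := ZLattice.exists_norm_sub_le (unitLattice K)
  refine ⟨B, hB0, fun t => ?_⟩
  obtain ⟨l, ⟨ξ, -, rfl⟩, hl⟩ := hB t
  exact ⟨ξ.toMul, by rwa [norm_sub_rev]⟩

theorem exists_abs_log_sub_le (K : Type*) [Field K] [NumberField K] :
    ∃ B, ∀ x : InfinitePlace K → ℝ, ∑ w, mult w * x w = 0 →
      ∃ ξ : (𝓞 K)ˣ, ∀ w, |Real.log (w (ξ : K)) - x w| ≤ B := by
  obtain ⟨B, hB0, hB⟩ := exists_norm_logEmbedding_sub_le K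
  refine ⟨Fintype.card (InfinitePlace K) * B, fun x hx => ?_⟩
  obtain ⟨ξ, hξ⟩ := hB fun w => mult w.1 * x w.1
  set y : InfinitePlace K → ℝ := fun w => mult w * (Real.log (w (ξ : K)) - x w)
  -- `logEmbedding` forgets `w₀`; the product formula bounds that coordinate by the others.
  have hy_sum : ∑ w, y w = 0 := by
    simp only [y, mul_sub, Finset.sum_sub_distrib, sum_mult_mul_log, hx, sub_zero]
  have hy_ne (w : InfinitePlace K) (hw : w ≠ w₀) : |y w| ≤ B := by
    simpa [y, mul_sub] using (norm_le_pi_norm _ ⟨w, hw⟩).trans hξ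
  have hcard : (1 : ℝ) ≤ Fintype.card (InfinitePlace K) := by
    exact_mod_cast Fintype.card_pos
  have hy (w : InfinitePlace K) : |y w| ≤ Fintype.card (InfinitePlace K) * B := by
    by_cases hw : w = w₀
    · rw [Fintype.sum_eq_add_sum_subtype_ne _ w₀, add_eq_zero_iff_eq_neg] at hy_sum
      calc |y w| = |∑ w : {w // w ≠ w₀}, y w.1| := by rw [hw, hy_sum, abs_neg]
        _ ≤ ∑ w : {w // w ≠ w₀}, |y w.1| := Finset.abs_sum_le_sum_abs _ _
        _ ≤ (Finset.univ : Finset {w // w ≠ w₀}).card • B :=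
            Finset.sum_le_card_nsmul _ _ _ fun w _ => hy_ne w.1 w.2
        _ ≤ Fintype.card (InfinitePlace K) * B := by
            rw [nsmul_eq_mul, Finset.card_univ]
            gcongr
            exact Fintype.card_subtype_le _
    · exact (hy_ne w hw).trans (le_mul_of_one_le_left hB0 hcard)
  refine ⟨ξ, fun w => (hy w).trans' ?_⟩
  rw [abs_mul, Nat.abs_cast]
  exact le_mul_of_one_le_left (abs_nonneg _) one_le_mult

end NumberField.Units

theorem max_norm_eq_norm_fin_two {E : Type*} [SeminormedAddCommGroup E] (x : Fin 2 → E) :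
    max ‖x 0‖ ‖x 1‖ = ‖x‖ :=
  le_antisymm (max_le (norm_le_pi_norm x 0) (norm_le_pi_norm x 1)) <|
    (pi_norm_le_iff_of_nonneg (by positivity)).2 <| Fin.forall_fin_two.2
      ⟨le_max_left _ _, le_max_right _ _⟩

section

variable {K : Type*} [Field K] [NumberField K]

open InfinitePlace

theorem heightKS_eq_prod (v : InfinitePlace K → Fin 2 → ℂ) :
    heightKS K v = ∏ w, ‖v w‖ ^ mult w := by
  rw [heightKS, ← Finset.prod_filter_mul_prod_filter_not Finset.univ IsReal]
  simp only [not_isReal_iff_isComplex, max_norm_eq_norm_fin_two]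
  congr 1 <;> refine Finset.prod_congr rfl fun w hw => ?_
  · rw [(Finset.mem_filter.1 hw).2.mult_eq_one, pow_one]
  · rw [(Finset.mem_filter.1 hw).2.mult_eq_two]

theorem heightKS_nonneg {v : InfinitePlace K → Fin 2 → ℂ} : 0 ≤ heightKS K v := by
  rw [heightKS_eq_prod]; positivity

theorem supNormKS_eq_norm (v : InfinitePlace K → Fin 2 → ℂ) : supNormKS K v = ‖v‖ := by
  simp only [supNormKS, max_norm_eq_norm_fin_two]
  refine le_antisymm (Finset.sup'_le _ _ fun w _ => norm_le_pi_norm v w)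
    ((pi_norm_le_iff_of_nonneg ?_).2 fun w => Finset.le_sup' (‖v ·‖) (Finset.mem_univ w))
  exact Finset.le_sup'_of_le _ (Finset.mem_univ (Classical.arbitrary _)) (norm_nonneg _)

theorem heightKS_ne_zero_iff (v : InfinitePlace K → Fin 2 → ℂ) :
    heightKS K v ≠ 0 ↔ ∀ w, v w ≠ 0 := by
  simp [heightKS_eq_prod, Finset.prod_ne_zero_iff, mult_ne_zero]

theorem log_heightKS {v : InfinitePlace K → Fin 2 → ℂ} (hv : ∀ w, v w ≠ 0) :
    Real.log (heightKS K v) = ∑ w, mult w * Real.log ‖v w‖ := by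
  simp [heightKS_eq_prod, Real.log_prod fun w _ => pow_ne_zero _ (norm_ne_zero_iff.2 (hv w)),
    Real.log_pow]

variable (K) in
theorem exists_unit_abs_log_mul_norm_sub_le : ∃ B, ∀ v : InfinitePlace K → Fin 2 → ℂ,
    (∀ w, v w ≠ 0) → ∃ ξ : (𝓞 K)ˣ, ∀ w,
      |Real.log (w (ξ : K) * ‖v w‖) - Real.log (heightKS K v) / Module.finrank ℚ K| ≤ B := by
  obtain ⟨B, hB⟩ := Units.exists_abs_log_sub_le K
  refine ⟨B, fun v hv => ?_⟩
  set μ := Real.log (heightKS K v) / Module.finrank ℚ K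
  obtain ⟨ξ, hξ⟩ := hB (fun w => μ - Real.log ‖v w‖) <| by
    have hd : (Module.finrank ℚ K : ℝ) ≠ 0 := Nat.cast_ne_zero.2 Module.finrank_pos.ne'
    simp only [mul_sub, Finset.sum_sub_distrib, ← Finset.sum_mul, ← Nat.cast_sum, sum_mult_eq,
      μ, ← log_heightKS hv]
    field_simp
    ring
  refine ⟨ξ, fun w => ?_⟩
  rw [Real.log_mul (Units.pos_at_place ξ w).ne' (norm_ne_zero_iff.2 (hv w))]
  convert hξ w using 2
  ring

end

open InfinitePlace in
/-- There is `C > 0` depending only on `K` such that every `v ∈ K_S²` with `H(v) ≠ 0` can be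
rescaled by a unit `ξ` so that `C⁻¹ H(v)^{1/d} ≤ ‖τ(ξ)·v‖ ≤ C H(v)^{1/d}`. -/
theorem height_vs_norm (K : Type*) [Field K] [NumberField K] :
    ∃ C : ℝ, 0 < C ∧
      ∀ v : InfinitePlace K → Fin 2 → ℂ, heightKS K v ≠ 0 →
        ∃ ξ : (𝓞 K)ˣ,
          C⁻¹ * (heightKS K v) ^ ((1 : ℝ) / (Module.finrank ℚ K)) ≤
              supNormKS K (fun w i => w.embedding (algebraMap (𝓞 K) K ξ) * v w i) ∧
            supNormKS K (fun w i => w.embedding (algebraMap (𝓞 K) K ξ) * v w i) ≤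
              C * (heightKS K v) ^ ((1 : ℝ) / (Module.finrank ℚ K)) := by
  obtain ⟨B, hB⟩ := exists_unit_abs_log_mul_norm_sub_le K
  refine ⟨Real.exp B, Real.exp_pos B, fun v hH => ?_⟩
  have hv := (heightKS_ne_zero_iff v).1 hH
  obtain ⟨ξ, hξ⟩ := hB v hv
  set μ := Real.log (heightKS K v) / Module.finrank ℚ K
  set u : InfinitePlace K → Fin 2 → ℂ := fun w i => w.embedding (algebraMap (𝓞 K) K ξ) * v w i
  have hu_bounds (w : InfinitePlace K) :
      Real.exp (-B + μ) ≤ ‖u w‖ ∧ ‖u w‖ ≤ Real.exp (B + μ) := by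
    have hu : ‖u w‖ = w (ξ : K) * ‖v w‖ := by
      rw [show u w = w.embedding (ξ : K) • v w from rfl, norm_smul, norm_embedding_eq]
    have hu_pos : 0 < ‖u w‖ := hu ▸ mul_pos (Units.pos_at_place ξ w) (norm_pos_iff.2 (hv w))
    rw [← Real.le_log_iff_exp_le hu_pos, ← Real.log_le_iff_le_exp hu_pos, hu]
    constructor <;> linarith [abs_le.1 (hξ w)]
  have hroot : heightKS K v ^ ((1 : ℝ) / Module.finrank ℚ K) = Real.exp μ := by
    rw [Real.rpow_def_of_pos (lt_of_le_of_ne heightKS_nonneg hH.symm), mul_one_div]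
  refine ⟨ξ, ?_⟩
  rw [supNormKS_eq_norm, hroot, ← Real.exp_neg, ← Real.exp_add, ← Real.exp_add]
  exact ⟨(hu_bounds (Classical.arbitrary _)).1.trans (norm_le_pi_norm u _),
    (pi_norm_le_iff_of_nonneg (Real.exp_pos _).le).2 fun w => (hu_bounds w).2⟩
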